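/- arXiv:1803.06864 — 2 statements merged into one kernel-verified Lean document; each statement's English description precedes it below -/
import Mathlib

section
/- Let Y subset R^n and x0 in Y, and define the tangent cone Tan(Y, x0) := { v in R^n \ {0} : exists sequence (v_i) in R^n \ {0} with v_i -> 0, x0 + v_i in Y, v_i/||v_i|| -> v/||v|| } union {0}. If D_x F-tilde(x, alpha) is invertible for all x in P and alpha in A(x), then Tan(P_int, x0) = Tan(P, x0) for all x0 in P_int. -/
/-!
Let `v` be tangent to `P` at `x₀` along points `x₀ + uᵢ` with multipliers `αᵢ`. By compactness of
the closed simplex we may assume `αᵢ → α*`, and then `α* ∈ A(x₀)`. As `D_x F̃(x₀, α*)` is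
invertible, near `(x₀, α*)` the zero set of `F̃` is the graph `x = g(α)` of a Lipschitz implicit
function, so `x₀ + uᵢ = g(αᵢ)`. Replacing each `αᵢ` by a point `βᵢ` of the open simplex with
`‖βᵢ - αᵢ‖ = o(‖uᵢ‖)` gives points `g(βᵢ) ∈ P_int` within `o(‖uᵢ‖)` of `x₀ + uᵢ`, which realise
the same direction `v`. The other inclusion is monotonicity of the tangent cone.
-/

noncomputable def grad (n : ℕ) (g : (Fin n → ℝ) → ℝ) (x : Fin n → ℝ) : Fin n → ℝ :=
  fun j => fderiv ℝ g x (Pi.single j 1)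

noncomputable def Ftilde (n K : ℕ) (f : Fin (K + 1) → (Fin n → ℝ) → ℝ)
    (p : (Fin n → ℝ) × (Fin K → ℝ)) : Fin n → ℝ :=
  (∑ i : Fin K, p.2 i •
      (grad n (f i.castSucc) p.1 - grad n (f (Fin.last K)) p.1))
    + grad n (f (Fin.last K)) p.1

def openSimplex (K : ℕ) : Set (Fin K → ℝ) := {α | (∀ i, 0 < α i) ∧ ∑ i, α i < 1}

def closedSimplex (K : ℕ) : Set (Fin K → ℝ) := {α | (∀ i, 0 ≤ α i) ∧ ∑ i, α i ≤ 1}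

noncomputable def DxFtilde (n K : ℕ) (f : Fin (K + 1) → (Fin n → ℝ) → ℝ)
    (p : (Fin n → ℝ) × (Fin K → ℝ)) : (Fin n → ℝ) →L[ℝ] (Fin n → ℝ) :=
  fderiv ℝ (fun x => Ftilde n K f (x, p.2)) p.1

def KKTset (n K : ℕ) (f : Fin (K + 1) → (Fin n → ℝ) → ℝ) (x : Fin n → ℝ) :
    Set (Fin K → ℝ) :=
  {α | α ∈ closedSimplex K ∧ Ftilde n K f (x, α) = 0}

def ParetoCritical (n K : ℕ) (f : Fin (K + 1) → (Fin n → ℝ) → ℝ) : Set (Fin n → ℝ) :=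
  {x | ∃ α, α ∈ KKTset n K f x}

def ParetoCriticalInt (n K : ℕ) (f : Fin (K + 1) → (Fin n → ℝ) → ℝ) : Set (Fin n → ℝ) :=
  {x | ∃ α ∈ openSimplex K, Ftilde n K f (x, α) = 0}

/-- The tangent cone of a set `Y` at a point `x`, via normalized difference sequences. -/
def Tan {E : Type*} [NormedAddCommGroup E] [NormedSpace ℝ E] (Y : Set E) (x : E) :
    Set E :=
  {v | v = 0 ∨ ∃ u : ℕ → E, (∀ i, u i ≠ 0) ∧
    Filter.Tendsto u Filter.atTop (nhds 0) ∧ (∀ i, x + u i ∈ Y) ∧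
    Filter.Tendsto (fun i => ‖u i‖⁻¹ • u i) Filter.atTop (nhds (‖v‖⁻¹ • v))}

open Filter Topology Asymptotics

section TangentCone

variable {E : Type*} [NormedAddCommGroup E] [NormedSpace ℝ E]

theorem norm_inv_norm_smul_sub_inv_norm_smul_le (a : E) {b : E} (hb : b ≠ 0) :
    ‖‖a‖⁻¹ • a - ‖b‖⁻¹ • b‖ ≤ 2 * ‖a - b‖ / ‖b‖ := by
  have hb' : 0 < ‖b‖ := norm_pos_iff.2 hb
  have hdecomp : ‖a‖⁻¹ • a - ‖b‖⁻¹ • b =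
      ‖b‖⁻¹ • ((a - b) + (‖b‖ - ‖a‖) • (‖a‖⁻¹ • a)) := by
    rcases eq_or_ne a 0 with rfl | ha
    · simp [smul_neg]
    · have ha' : ‖a‖ ≠ 0 := norm_ne_zero_iff.2 ha
      match_scalars
      · field_simp; ring
      · field_simp
  have hunit : ‖‖a‖⁻¹ • a‖ ≤ 1 := by
    rcases eq_or_ne a 0 with rfl | ha
    · simp
    · exact (norm_smul_inv_norm ha).le
  rw [hdecomp, norm_smul, norm_inv, norm_norm, inv_mul_eq_div]
  gcongr
  calc ‖a - b + (‖b‖ - ‖a‖) • (‖a‖⁻¹ • a)‖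
      ≤ ‖a - b‖ + |‖b‖ - ‖a‖| * ‖‖a‖⁻¹ • a‖ := by
        simpa [norm_smul] using norm_add_le (a - b) ((‖b‖ - ‖a‖) • (‖a‖⁻¹ • a))
    _ ≤ ‖a - b‖ + ‖a - b‖ * 1 := by
        gcongr
        rw [abs_sub_comm]
        exact abs_norm_sub_norm_le a b
    _ = 2 * ‖a - b‖ := by ring

theorem tendsto_inv_norm_smul_sub_of_isLittleO {ι : Type*} {l : Filter ι} {u w : ι → E}
    (hu : ∀ᶠ i in l, u i ≠ 0) (hwu : (fun i => w i - u i) =o[l] u) :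
    Tendsto (fun i => ‖w i‖⁻¹ • w i - ‖u i‖⁻¹ • u i) l (𝓝 0) := by
  have hratio : Tendsto (fun i => 2 * ‖w i - u i‖ / ‖u i‖) l (𝓝 0) := by
    simpa [mul_div_assoc] using (hwu.norm_norm.tendsto_div_nhds_zero).const_mul 2
  refine squeeze_zero_norm' ?_ hratio
  filter_upwards [hu] with i hi using norm_inv_norm_smul_sub_inv_norm_smul_le _ hi

theorem Tan_mono {Y Z : Set E} (h : Y ⊆ Z) (x : E) : Tan Y x ⊆ Tan Z x := by
  rintro v (rfl | ⟨u, hu0, hu, huY, hun⟩)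
  · exact Or.inl rfl
  · exact Or.inr ⟨u, hu0, hu, fun i => h (huY i), hun⟩

theorem mem_Tan_of_eventually {Y : Set E} {x v : E} {u : ℕ → E}
    (huY : ∀ᶠ i in atTop, u i ≠ 0 ∧ x + u i ∈ Y) (hu : Tendsto u atTop (𝓝 0))
    (hun : Tendsto (fun i => ‖u i‖⁻¹ • u i) atTop (𝓝 (‖v‖⁻¹ • v))) : v ∈ Tan Y x := by
  obtain ⟨N, hN⟩ := eventually_atTop.1 huY
  exact Or.inr ⟨fun i => u (i + N), fun i => (hN _ (Nat.le_add_left N i)).1,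
    hu.comp (tendsto_add_atTop_nat N), fun i => (hN _ (Nat.le_add_left N i)).2,
    hun.comp (tendsto_add_atTop_nat N)⟩

theorem mem_Tan_of_isLittleO {Y : Set E} {x v : E} {u w : ℕ → E} (hu0 : ∀ i, u i ≠ 0)
    (hu : Tendsto u atTop (𝓝 0)) (hun : Tendsto (fun i => ‖u i‖⁻¹ • u i) atTop (𝓝 (‖v‖⁻¹ • v)))
    (hwu : (fun i => w i - u i) =o[atTop] u) (hwY : ∀ᶠ i in atTop, x + w i ∈ Y) :
    v ∈ Tan Y x := by
  have hw0 : ∀ᶠ i in atTop, w i ≠ 0 := by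
    filter_upwards [hwu.def one_half_pos] with i hi hwi
    rw [hwi, zero_sub, norm_neg] at hi
    exact hu0 i (norm_eq_zero.1 (by linarith [norm_nonneg (u i)]))
  have hw : Tendsto w atTop (𝓝 0) := by
    simpa using (hwu.trans_tendsto hu).add hu
  have hwn := hun.add (tendsto_inv_norm_smul_sub_of_isLittleO (.of_forall hu0) hwu)
  simp only [add_sub_cancel, add_zero] at hwn
  exact mem_Tan_of_eventually (hw0.and hwY) hw hwn

end TangentCone

theorem exists_seq_mem_isLittleO_sub_of_mem_closure {A E : Type*} [NormedAddCommGroup A]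
    [NormedAddCommGroup E] {O : Set A} {α : ℕ → A} (hα : ∀ i, α i ∈ closure O)
    {u : ℕ → E} (hu : ∀ i, u i ≠ 0) :
    ∃ β : ℕ → A, (∀ i, β i ∈ O) ∧ (fun i => β i - α i) =o[atTop] u := by
  have hε : ∀ i : ℕ, 0 < ‖u i‖ / ((i : ℝ) + 1) := fun i => by
    have := norm_pos_iff.2 (hu i); positivity
  choose β hβO hβ using fun i => Metric.mem_closure_iff.1 (hα i) _ (hε i)
  refine ⟨β, hβO, isLittleO_iff.2 fun c hc => ?_⟩
  filter_upwards [(tendsto_order.1 tendsto_one_div_add_atTop_nhds_zero_nat).2 c hc] with i hi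
  rw [← dist_eq_norm, dist_comm]
  calc dist (α i) (β i) ≤ ‖u i‖ / ((i : ℝ) + 1) := (hβ i).le
    _ = 1 / ((i : ℝ) + 1) * ‖u i‖ := by ring
    _ ≤ c * ‖u i‖ := by gcongr

theorem openSimplex_subset_closedSimplex (K : ℕ) : openSimplex K ⊆ closedSimplex K :=
  fun _ hα => ⟨fun i => (hα.1 i).le, hα.2.le⟩

theorem isCompact_closedSimplex (K : ℕ) : IsCompact (closedSimplex K) := by
  have hclosed : IsClosed ({α : Fin K → ℝ | 0 ≤ α} ∩ {α | ∑ i, α i ≤ 1}) :=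
    (isClosed_le continuous_const continuous_id).inter
      (isClosed_le (continuous_finsetSum _ fun i _ => continuous_apply i) continuous_const)
  refine (isCompact_Icc (a := 0) (b := 1)).of_isClosed_subset hclosed fun α hα =>
    ⟨hα.1, fun i => ?_⟩
  exact (Finset.single_le_sum (fun j _ => hα.1 j) (Finset.mem_univ i)).trans hα.2

theorem openSegment_subset_openSimplex {K : ℕ} {α β : Fin K → ℝ} (hα : α ∈ openSimplex K)
    (hβ : β ∈ closedSimplex K) : openSegment ℝ α β ⊆ openSimplex K := by
  rintro _ ⟨s, t, hs, ht, hst, rfl⟩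
  refine ⟨fun i => ?_, ?_⟩
  · simp only [Pi.add_apply, Pi.smul_apply, smul_eq_mul]
    nlinarith [hα.1 i, hβ.1 i]
  · simp only [Pi.add_apply, Pi.smul_apply, smul_eq_mul, Finset.sum_add_distrib, ← Finset.mul_sum]
    nlinarith [hα.2, hβ.2]

theorem closedSimplex_subset_closure_openSimplex (K : ℕ) :
    closedSimplex K ⊆ closure (openSimplex K) := by
  have hc : (fun _ => ((K : ℝ) + 1)⁻¹ : Fin K → ℝ) ∈ openSimplex K := by
    refine ⟨fun _ => by positivity, ?_⟩
    rw [Finset.sum_const, Finset.card_univ, Fintype.card_fin, nsmul_eq_mul, ← div_eq_mul_inv,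
      div_lt_one (by positivity)]
    linarith
  intro β hβ
  exact closure_mono (openSegment_subset_openSimplex hc hβ)
    (segment_subset_closure_openSegment (right_mem_segment ℝ _ _))

section ImplicitZeros

variable {E A G : Type*} [NormedAddCommGroup E] [NormedSpace ℝ E] [CompleteSpace E]
  [NormedAddCommGroup A] [NormedSpace ℝ A] [CompleteSpace A]
  [NormedAddCommGroup G] [NormedSpace ℝ G] [CompleteSpace G]

theorem HasStrictFDerivAt.exists_lipschitzOnWith_implicitFunction {F : E × A → G}
    {D : E × A →L[ℝ] G} {p : E × A} (hF : HasStrictFDerivAt F D p)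
    (hD : (D ∘L .inl ℝ E A).IsInvertible) :
    ∃ g : A → E, (∃ L, ∃ s ∈ 𝓝 p.2, LipschitzOnWith L g s) ∧
      (∀ᶠ a in 𝓝 p.2, F (g a, a) = F p) ∧ ∀ᶠ q in 𝓝 p, F q = F p → q.1 = g q.2 := by
  have hswap : HasStrictFDerivAt (F ∘ Prod.swap)
      (D ∘L (ContinuousLinearEquiv.prodComm ℝ A E : A × E →L[ℝ] E × A)) p.swap :=
    hF.comp _ (ContinuousLinearEquiv.prodComm ℝ A E).hasStrictFDerivAt
  have hD' : ((D ∘L (ContinuousLinearEquiv.prodComm ℝ A E : A × E →L[ℝ] E × A)) ∘L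
      .inr ℝ A E).IsInvertible := by
    convert hD using 1
    ext; simp
  refine ⟨hswap.implicitFunctionOfProdDomain hD', ?_, ?_, ?_⟩
  · obtain ⟨L, s, hs, hlip⟩ :=
      (hswap.hasStrictFDerivAt_implicitFunctionOfProdDomain hD').exists_lipschitzOnWith
    exact ⟨L, s, hs, hlip⟩
  · exact hswap.eventually_apply_implicitFunctionOfProdDomain hD'
  · filter_upwards [continuous_swap.continuousAt.eventually
      (hswap.eventually_apply_eq_iff_implicitFunctionOfProdDomain hD')] with q hq
    exact fun h => (hq.1 h).symm

theorem HasStrictFDerivAt.exists_seq_zero_isLittleO {F : E × A → G} {D : E × A →L[ℝ] G}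
    {x₀ : E} {a : A} (hF : HasStrictFDerivAt F D (x₀, a)) (hD : (D ∘L .inl ℝ E A).IsInvertible)
    (hFa : F (x₀, a) = 0) {u : ℕ → E} {α β : ℕ → A} (hu : Tendsto u atTop (𝓝 0))
    (hα : Tendsto α atTop (𝓝 a)) (hzero : ∀ i, F (x₀ + u i, α i) = 0)
    (hβα : (fun i => β i - α i) =o[atTop] u) :
    ∃ w : ℕ → E, (fun i => w i - u i) =o[atTop] u ∧ ∀ᶠ i in atTop, F (x₀ + w i, β i) = 0 := by
  obtain ⟨g, ⟨L, s, hs, hlip⟩, hg, hg_unique⟩ :=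
    hF.exists_lipschitzOnWith_implicitFunction hD
  rw [hFa] at hg hg_unique
  have hβ : Tendsto β atTop (𝓝 a) := by
    simpa using hα.add (hβα.trans_tendsto hu)
  have hxα : Tendsto (fun i => (x₀ + u i, α i)) atTop (𝓝 (x₀, a)) := by
    simpa using (hu.const_add x₀).prodMk_nhds hα
  have hgα : ∀ᶠ i in atTop, x₀ + u i = g (α i) := by
    filter_upwards [hxα.eventually hg_unique] with i hi using hi (hzero i)
  refine ⟨fun i => g (β i) - x₀, ?_, ?_⟩
  · -- eventually `w i - u i = g (β i) - g (α i)`, so the Lipschitz bound carries `β - α = o(u)`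
    refine (IsBigO.of_bound L ?_).trans_isLittleO hβα
    filter_upwards [hgα, hα.eventually_mem hs, hβ.eventually_mem hs] with i hi hαs hβs
    rw [sub_sub, hi, ← dist_eq_norm, ← dist_eq_norm]
    exact hlip.dist_le_mul _ hβs _ hαs
  · filter_upwards [hβ.eventually hg] with i hi
    simpa using hi

theorem Tan_subset_Tan_of_isInvertible {F : E × A → G} (hF : ContDiff ℝ 1 F) {O C : Set A}
    (hC : IsCompact C) (hCO : C ⊆ closure O)
    (hinv : ∀ x, ∀ a ∈ C, F (x, a) = 0 → (fderiv ℝ (fun y => F (y, a)) x).IsInvertible)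
    (x₀ : E) : Tan {x | ∃ a ∈ C, F (x, a) = 0} x₀ ⊆ Tan {x | ∃ a ∈ O, F (x, a) = 0} x₀ := by
  rintro v (rfl | ⟨u, hu0, hu, huC, hun⟩)
  · exact Or.inl rfl
  choose α hαC hα0 using huC
  obtain ⟨a, haC, φ, hφ, hαφ⟩ := hC.tendsto_subseq hαC
  have huφ : Tendsto (u ∘ φ) atTop (𝓝 0) := hu.comp hφ.tendsto_atTop
  have hFa : F (x₀, a) = 0 := by
    have hlim : Tendsto (fun i => (x₀ + u (φ i), α (φ i))) atTop (𝓝 (x₀, a)) := by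
      simpa using (huφ.const_add x₀).prodMk_nhds hαφ
    exact tendsto_nhds_unique ((hF.continuous.tendsto _).comp hlim)
      (by simp [Function.comp_def, hα0])
  have hDF : HasStrictFDerivAt F (fderiv ℝ F (x₀, a)) (x₀, a) :=
    hF.contDiffAt.hasStrictFDerivAt one_ne_zero
  have hpartial : fderiv ℝ (fun y => F (y, a)) x₀ = fderiv ℝ F (x₀, a) ∘L .inl ℝ E A :=
    (hDF.hasFDerivAt.comp x₀ (hasFDerivAt_prodMk_left x₀ a)).fderiv
  obtain ⟨β, hβO, hβα⟩ :=
    exists_seq_mem_isLittleO_sub_of_mem_closure (fun i => hCO (hαC (φ i))) (fun i => hu0 (φ i))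
  obtain ⟨w, hwu, hw0⟩ := hDF.exists_seq_zero_isLittleO (hpartial ▸ hinv x₀ a haC hFa) hFa huφ
    hαφ (fun i => hα0 (φ i)) hβα
  exact mem_Tan_of_isLittleO (fun i => hu0 (φ i)) huφ (hun.comp hφ.tendsto_atTop) hwu
    (hw0.mono fun i hi => ⟨β i, hβO i, hi⟩)

end ImplicitZeros

theorem contDiff_grad {n : ℕ} {g : (Fin n → ℝ) → ℝ} (hg : ContDiff ℝ 2 g) :
    ContDiff ℝ 1 (grad n g) :=
  contDiff_pi.2 fun _ => (hg.fderiv_right (by norm_num)).clm_apply contDiff_const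

theorem contDiff_Ftilde {n K : ℕ} {f : Fin (K + 1) → (Fin n → ℝ) → ℝ}
    (hf : ∀ i, ContDiff ℝ 2 (f i)) : ContDiff ℝ 1 (Ftilde n K f) := by
  refine (ContDiff.sum fun i _ => ?_).add ((contDiff_grad (hf _)).comp contDiff_fst)
  exact ((contDiff_apply ℝ ℝ i).comp contDiff_snd).smul
    (((contDiff_grad (hf _)).sub (contDiff_grad (hf _))).comp contDiff_fst)

theorem ParetoCriticalInt_subset_ParetoCritical (n K : ℕ) (f : Fin (K + 1) → (Fin n → ℝ) → ℝ) :
    ParetoCriticalInt n K f ⊆ ParetoCritical n K f :=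
  fun _ ⟨α, hα, h⟩ => ⟨α, openSimplex_subset_closedSimplex K hα, h⟩

theorem tan_Pint_eq_tan_P_general (n K : ℕ)
    (f : Fin (K + 1) → (Fin n → ℝ) → ℝ) (hf : ∀ i, ContDiff ℝ 2 (f i))
    (hinv : ∀ x ∈ ParetoCritical n K f, ∀ α ∈ KKTset n K f x,
      IsUnit (DxFtilde n K f (x, α))) :
    ∀ x₀ ∈ ParetoCriticalInt n K f,
      Tan (ParetoCriticalInt n K f) x₀ = Tan (ParetoCritical n K f) x₀ := by
  intro x₀ _
  refine (Tan_mono (ParetoCriticalInt_subset_ParetoCritical n K f) x₀).antisymm ?_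
  refine Tan_subset_Tan_of_isInvertible (contDiff_Ftilde hf) (isCompact_closedSimplex K)
    (closedSimplex_subset_closure_openSimplex K) (fun x α hα h0 => ?_) x₀
  exact ⟨.unitsEquiv ℝ _ (hinv x ⟨α, hα, h0⟩ α ⟨hα, h0⟩).unit, rfl⟩

/-- if `D_x F̃(x,α)` is invertible for all `x ∈ P` and `α ∈ A(x)`, then the
tangent cones of `P_int` and `P` coincide at every point of `P_int`. -/
theorem tan_Pint_eq_tan_P (n K : ℕ) (hK : 0 < K)
    (f : Fin (K + 1) → (Fin n → ℝ) → ℝ) (hf : ∀ i, ContDiff ℝ 2 (f i))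
    (hinv : ∀ x ∈ ParetoCritical n K f, ∀ α ∈ KKTset n K f x,
      IsUnit (DxFtilde n K f (x, α))) :
    ∀ x₀ ∈ ParetoCriticalInt n K f,
      Tan (ParetoCriticalInt n K f) x₀ = Tan (ParetoCritical n K f) x₀ :=
  tan_Pint_eq_tan_P_general n K f hf hinv
end

section
/- If x0 is a Pareto critical point and rank(Df(x0)) < k - 1, then there exists a KKT multiplier alpha of x0 with at least one component equal to zero. -/
noncomputable def Jac (n k : ℕ) (f : Fin k → (Fin n → ℝ) → ℝ) (x : Fin n → ℝ) :
    Matrix (Fin k) (Fin n) ℝ :=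
  Matrix.of fun i j => fderiv ℝ (f i) x (Pi.single j 1)

def IsKKTMultiplier (n k : ℕ) (f : Fin k → (Fin n → ℝ) → ℝ) (x : Fin n → ℝ)
    (α : Fin k → ℝ) : Prop :=
  (∀ i, 0 ≤ α i) ∧ ∑ i, α i = 1 ∧ (∑ i, α i • fderiv ℝ (f i) x) = 0

/-! The KKT multipliers of `x₀` form the polytope `{α ≥ 0, ∑ αᵢ = 1, αᵀ Df(x₀) = 0}`. When
`rank Df(x₀) < k - 1`, the left kernel of `Df(x₀)` has dimension at least two, so it contains a
nonzero `v` with `∑ vᵢ = 0`; such a `v` has a negative entry. Moving from a multiplier `α` along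
`v` keeps both equations, and stopping at the first coordinate that reaches zero (a ratio test)
gives a multiplier with a zero component. -/

open Module Matrix

theorem Matrix.finrank_range_vecMulLinear {K m n : Type*} [Field K] [Fintype m] [Fintype n]
    (M : Matrix m n K) : finrank K (LinearMap.range M.vecMulLinear) = M.rank := by
  rw [← rank_transpose, rank, mulVecLin_transpose]

theorem Matrix.exists_ne_zero_vecMul_eq_zero_sum_eq_zero {K m n : Type*} [Field K] [Fintype m]
    [Fintype n] (M : Matrix m n K) (hM : M.rank + 1 < Fintype.card m) :
    ∃ v ≠ 0, v ᵥ* M = 0 ∧ ∑ i, v i = 0 := by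
  let Φ := M.vecMulLinear.rangeRestrict.prod (Fintype.linearCombination K fun _ : m => (1 : K))
  have hΦ : LinearMap.ker Φ ≠ ⊥ := LinearMap.ker_ne_bot_of_finrank_lt <| by
    rwa [finrank_prod, finrank_self, M.finrank_range_vecMulLinear, finrank_fintype_fun_eq_card]
  obtain ⟨v, hv, hv0⟩ := Submodule.exists_mem_ne_zero_of_ne_bot hΦ
  simp only [Φ, LinearMap.mem_ker, LinearMap.prod_apply, Function.prod_apply, Prod.mk_eq_zero,
    Fintype.linearCombination_apply, smul_eq_mul, mul_one] at hv
  exact ⟨v, hv0, by simpa [Subtype.ext_iff] using hv.1, hv.2⟩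

theorem exists_neg_of_sum_eq_zero {ι K : Type*} [Fintype ι] [AddCommGroup K] [LinearOrder K]
    [IsOrderedAddMonoid K] {v : ι → K} (hv : v ≠ 0) (hsum : ∑ i, v i = 0) : ∃ i, v i < 0 := by
  by_contra! hnonneg
  exact hv <| funext fun i =>
    (Finset.sum_eq_zero_iff_of_nonneg fun i _ => hnonneg i).1 hsum i (Finset.mem_univ i)

theorem exists_nonneg_add_smul_eq_zero {ι K : Type*} [Fintype ι] [Field K] [LinearOrder K]
    [IsStrictOrderedRing K] {α v : ι → K} (hα : 0 ≤ α) (hv : ∃ i, v i < 0) :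
    ∃ t : K, 0 ≤ α + t • v ∧ ∃ i, (α + t • v) i = 0 := by
  classical
  obtain ⟨i₀, hi₀, hmin⟩ := Finset.exists_min_image {i | v i < 0} (fun i => α i / -v i)
    (by simpa [Finset.Nonempty] using hv)
  simp only [Finset.mem_filter, Finset.mem_univ, true_and] at hi₀ hmin
  refine ⟨α i₀ / -v i₀, fun i => ?_, i₀, ?_⟩
  · simp only [Pi.zero_apply, Pi.add_apply, Pi.smul_apply, smul_eq_mul]
    rcases lt_or_ge (v i) 0 with hvi | hvi
    · have := (le_div_iff₀ (neg_pos.2 hvi)).1 (hmin i hvi)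
      linarith
    · have := mul_nonneg (div_nonneg (hα i₀) (neg_nonneg.2 hi₀.le)) hvi
      linarith [show 0 ≤ α i from hα i]
  · simp only [Pi.add_apply, Pi.smul_apply, smul_eq_mul]
    field_simp [hi₀.ne]
    ring

theorem sum_smul_fderiv_eq_zero_iff {n k : ℕ} (f : Fin k → (Fin n → ℝ) → ℝ)
    (x : Fin n → ℝ) (w : Fin k → ℝ) :
    ∑ i, w i • fderiv ℝ (f i) x = 0 ↔ w ᵥ* Jac n k f x = 0 := by
  have happly (j : Fin n) :
      (∑ i, w i • fderiv ℝ (f i) x) (Pi.single j 1) = (w ᵥ* Jac n k f x) j := by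
    simp [vecMul, dotProduct, Jac]
  refine ⟨fun h => funext fun j => by simp [← happly, h], fun h => ?_⟩
  refine ContinuousLinearMap.coe_injective <| (Pi.basisFun ℝ (Fin n)).ext fun j => ?_
  simpa [h] using happly j

theorem exists_multiplier_with_zero_component_general (n k : ℕ)
    (f : Fin k → (Fin n → ℝ) → ℝ)
    (x₀ : Fin n → ℝ) (hcrit : ∃ α, IsKKTMultiplier n k f x₀ α)
    (hrank : (Jac n k f x₀).rank < k - 1) :
    ∃ α, IsKKTMultiplier n k f x₀ α ∧ ∃ i, α i = 0 := by
  obtain ⟨α, hα_nonneg, hα_sum, hα_crit⟩ := hcrit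
  obtain ⟨v, hv0, hv_crit, hv_sum⟩ :=
    exists_ne_zero_vecMul_eq_zero_sum_eq_zero (Jac n k f x₀) (by rw [Fintype.card_fin]; omega)
  obtain ⟨t, ht_nonneg, i, hi⟩ :=
    exists_nonneg_add_smul_eq_zero hα_nonneg (exists_neg_of_sum_eq_zero hv0 hv_sum)
  refine ⟨α + t • v, ⟨ht_nonneg, ?_, ?_⟩, i, hi⟩
  · simp [Finset.sum_add_distrib, ← Finset.mul_sum, hα_sum, hv_sum]
  · rw [sum_smul_fderiv_eq_zero_iff] at hα_crit ⊢
    rw [add_vecMul, smul_vecMul, hα_crit, hv_crit, smul_zero, add_zero]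

/-- a Pareto critical point with `rank Df(x₀) < k - 1` admits a KKT
multiplier with a zero component. -/
theorem exists_multiplier_with_zero_component (n k : ℕ)
    (f : Fin k → (Fin n → ℝ) → ℝ) (hf : ∀ i, ContDiff ℝ 1 (f i))
    (x₀ : Fin n → ℝ) (hcrit : ∃ α, IsKKTMultiplier n k f x₀ α)
    (hrank : (Jac n k f x₀).rank < k - 1) :
    ∃ α, IsKKTMultiplier n k f x₀ α ∧ ∃ i, α i = 0 :=
  exists_multiplier_with_zero_component_general n k f x₀ hcrit hrank
end
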